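/- If w ∈ S_n has exactly one right descent k and exactly one left descent, then there is at most one index i with 1 ≤ i ≤ k−1 and w(i+1) − w(i) > 1, and at most one index i with k+2 ≤ i ≤ n and w(i) − w(i−1) > 1. -/

import Mathlib

/-- A permutation of ℕ supported on {1,…,n}, representing an element of Sₙ. -/
def Supported (n : ℕ) (w : Equiv.Perm ℕ) : Prop :=
  ∀ i, w i ≠ i → i ∈ Finset.Icc 1 n

/-- Right descent set: i ∈ [n-1] with w(i) > w(i+1). -/
def rightDescents (n : ℕ) (w : Equiv.Perm ℕ) : Finset ℕ :=
  (Finset.Icc 1 (n - 1)).filter (fun i => w (i + 1) < w i)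

/-- Left descent set: right descents of w⁻¹. -/
def leftDescents (n : ℕ) (w : Equiv.Perm ℕ) : Finset ℕ :=
  rightDescents n w⁻¹

/-!
A gap `w i + 1 < w (i + 1)` inside the increasing run `w 1 < ⋯ < w k` leaves the value
`v = w (i + 1) - 1` to be placed in the second run, i.e. at a position after `k`, while `v + 1` sits
at `i + 1 ≤ k`; so `v` is a left descent. Symmetrically, a gap `w (i - 1) + 1 < w i` in the second
run puts `v + 1` in the first run for `v = w (i - 1)`. Distinct gaps in one run give distinct left
descents, and there is only one.
-/

namespace Supported

variable {n : ℕ} {w : Equiv.Perm ℕ}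

theorem inv (hw : Supported n w) : Supported n w⁻¹ := by
  intro i hi
  apply hw
  contrapose! hi
  exact Equiv.Perm.inv_eq_iff_eq.2 hi.symm

theorem apply_mem_Icc (hw : Supported n w) {i : ℕ} (h₁ : 1 ≤ i) (h₂ : i ≤ n) :
    1 ≤ w i ∧ w i ≤ n := by
  by_cases h : w i = i
  · rw [h]
    exact ⟨h₁, h₂⟩
  · exact Finset.mem_Icc.1 (hw (w i) fun h' => h (w.injective h'))

end Supported

theorem mem_leftDescents {n : ℕ} {w : Equiv.Perm ℕ} {v : ℕ} :
    v ∈ leftDescents n w ↔ v ∈ Finset.Icc 1 (n - 1) ∧ w⁻¹ (v + 1) < w⁻¹ v :=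
  Finset.mem_filter

theorem strictMonoOn_Icc_of_notMem_rightDescents {n a b : ℕ} {w : Equiv.Perm ℕ}
    (ha : 1 ≤ a) (hb : b ≤ n) (h : ∀ i, a ≤ i → i < b → i ∉ rightDescents n w) :
    StrictMonoOn w (Set.Icc a b) := by
  refine strictMonoOn_of_lt_add_one Set.ordConnected_Icc fun i _ hi hi' => ?_
  rw [Set.mem_Icc] at hi hi'
  have hasc := h i hi.1 (by omega)
  simp only [rightDescents, Finset.mem_filter, Finset.mem_Icc, not_and, not_lt] at hasc
  have hne : w i ≠ w (i + 1) := fun he => by simpa using w.injective he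
  have := hasc ⟨by omega, by omega⟩
  omega

theorem StrictMonoOn.notMem_of_apply_mem_Ioo {β : Type*} [LinearOrder β] {f : ℕ → β}
    {s : Set ℕ} (hf : StrictMonoOn f s) {i j : ℕ} (hi : i ∈ s) (hi' : i + 1 ∈ s)
    (hj : f j ∈ Set.Ioo (f i) (f (i + 1))) : j ∉ s := fun hjs => by
  have h₁ := (hf.lt_iff_lt hi hjs).1 hj.1
  have h₂ := (hf.lt_iff_lt hjs hi').1 hj.2
  omega

section Gaps

variable {n k i : ℕ} {w : Equiv.Perm ℕ}

theorem apply_add_one_sub_one_mem_leftDescents (hw : Supported n w)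
    (hmono : StrictMonoOn w (Set.Icc 1 k)) (hkn : k ≤ n) (hi : 1 ≤ i) (hik : i < k)
    (hgap : w i + 1 < w (i + 1)) : w (i + 1) - 1 ∈ leftDescents n w := by
  have hwi := hw.apply_mem_Icc hi (by omega)
  have hwi' := hw.apply_mem_Icc (i := i + 1) (by omega) (by omega)
  set v := w (i + 1) - 1
  have hv : v + 1 = w (i + 1) := by omega
  have hj := hw.inv.apply_mem_Icc (i := v) (by omega) (by omega)
  have hjk : w⁻¹ v ∉ Set.Icc 1 k :=
    hmono.notMem_of_apply_mem_Ioo (i := i) ⟨hi, by omega⟩ ⟨by omega, hik⟩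
      (by simp only [Equiv.Perm.coe_inv, Equiv.apply_symm_apply, Set.mem_Ioo]; omega)
  rw [Set.mem_Icc, not_and, not_le] at hjk
  rw [mem_leftDescents, hv, Equiv.Perm.inv_eq_iff_eq.2 rfl, Finset.mem_Icc]
  exact ⟨⟨by omega, by omega⟩, by omega⟩

theorem apply_sub_one_mem_leftDescents (hw : Supported n w)
    (hmono : StrictMonoOn w (Set.Icc (k + 1) n)) (hki : k + 2 ≤ i) (hin : i ≤ n)
    (hgap : w (i - 1) + 1 < w i) : w (i - 1) ∈ leftDescents n w := by
  obtain ⟨m, rfl⟩ : ∃ m, i = m + 1 := ⟨i - 1, by omega⟩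
  rw [Nat.add_sub_cancel] at hgap ⊢
  have hwm := hw.apply_mem_Icc (i := m) (by omega) (by omega)
  have hwm' := hw.apply_mem_Icc (i := m + 1) (by omega) hin
  have hj := hw.inv.apply_mem_Icc (i := w m + 1) (by omega) (by omega)
  have hjk : w⁻¹ (w m + 1) ∉ Set.Icc (k + 1) n :=
    hmono.notMem_of_apply_mem_Ioo (i := m) ⟨by omega, by omega⟩ ⟨by omega, hin⟩
      (by simp only [Equiv.Perm.coe_inv, Equiv.apply_symm_apply, Set.mem_Ioo]; omega)
  rw [Set.mem_Icc, not_and, not_le] at hjk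
  rw [mem_leftDescents, Equiv.Perm.inv_eq_iff_eq.2 rfl, Finset.mem_Icc]
  exact ⟨⟨by omega, by omega⟩, by omega⟩

end Gaps

/-- If w ∈ Sₙ has exactly one right descent k and exactly one left descent,
then there is at most one index i with 1 ≤ i ≤ k−1 and w(i+1) − w(i) > 1, and
at most one index i with k+2 ≤ i ≤ n and w(i) − w(i−1) > 1. -/
theorem gaps_at_most_one (n : ℕ) (w : Equiv.Perm ℕ) (hw : Supported n w)
    (k : ℕ) (hR : rightDescents n w = {k}) (hL : (leftDescents n w).card = 1) :
    ((Finset.Icc 1 (k - 1)).filter (fun i => w i + 1 < w (i + 1))).card ≤ 1 ∧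
    ((Finset.Icc (k + 2) n).filter (fun i => w (i - 1) + 1 < w i)).card ≤ 1 := by
  have hkn : k ≤ n - 1 := by
    have hk : k ∈ rightDescents n w := hR ▸ Finset.mem_singleton_self k
    exact (Finset.mem_Icc.1 (Finset.mem_filter.1 hk).1).2
  have hasc : ∀ i, i ≠ k → i ∉ rightDescents n w := by simp [hR]
  have hmono₁ : StrictMonoOn w (Set.Icc 1 k) :=
    strictMonoOn_Icc_of_notMem_rightDescents le_rfl (by omega) fun i _ hi => hasc i (by omega)
  have hmono₂ : StrictMonoOn w (Set.Icc (k + 1) n) :=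
    strictMonoOn_Icc_of_notMem_rightDescents (by omega) le_rfl fun i hi _ => hasc i (by omega)
  constructor
  · refine (Finset.card_le_card_of_injOn (fun i => w (i + 1) - 1) (fun i hi => ?_) ?_).trans hL.le
    · simp only [Finset.coe_filter, Finset.mem_Icc, Set.mem_ofPred_eq] at hi
      exact apply_add_one_sub_one_mem_leftDescents hw hmono₁ (by omega) hi.1.1 (by omega) hi.2
    · intro i hi i' hi' h
      simp only [Finset.coe_filter, Set.mem_ofPred_eq] at hi hi' h
      simpa using w.injective (by omega : w (i + 1) = w (i' + 1))
  · refine (Finset.card_le_card_of_injOn (fun i => w (i - 1)) (fun i hi => ?_) ?_).trans hL.le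
    · simp only [Finset.coe_filter, Finset.mem_Icc, Set.mem_ofPred_eq] at hi
      exact apply_sub_one_mem_leftDescents hw hmono₂ hi.1.1 hi.1.2 hi.2
    · intro i hi i' hi' h
      simp only [Finset.coe_filter, Finset.mem_Icc, Set.mem_ofPred_eq] at hi hi'
      have := w.injective h
      omega
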